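/- Every covering space of the unit interval is trivial. Let E be a topological space and p : E → [0,1] a covering map, where [0,1] is the closed unit interval of ℝ with its subspace topology. Then there exists a homeomorphism h : E → [0,1] × p⁻¹({0}) (where the fiber p⁻¹({0}) carries its subspace topology) such that the first projection composed with h equals p. -/

import Mathlib

open Set unitInterval

section
variable {E : Type*} [TopologicalSpace E] {p : E → unitInterval}

/-- Step lemma: lifting over a subinterval contained in a trivialization's base set,
through a prescribed point. -/
theorem step_lift {E : Type*} [TopologicalSpace E] {p : E → unitInterval}
    {x₀ : unitInterval} (T : Bundle.Trivialization (p ⁻¹' {x₀}) p)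
    {a b : unitInterval} (hab : a ≤ b) (hsub : Icc a b ⊆ T.baseSet)
    (e : E) (he : p e ∈ Icc a b) :
    ∃ S : unitInterval → E, Continuous S ∧ (∀ t ∈ Icc a b, p (S t) = t) ∧ S (p e) = e := by
  have hab' : (a : ℝ) ≤ b := hab
  set cl : unitInterval → unitInterval := fun t =>
    ⟨max (a : ℝ) (min (b : ℝ) (t : ℝ)),
      ⟨le_max_of_le_left a.2.1, max_le a.2.2 ((min_le_left _ _).trans b.2.2)⟩⟩ with hcl
  have hcl_mem : ∀ t, cl t ∈ Icc a b := by
    intro t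
    constructor
    · exact Subtype.coe_le_coe.mp (le_max_left _ _)
    · exact Subtype.coe_le_coe.mp (max_le hab' (min_le_left _ _))
  have hcl_id : ∀ t ∈ Icc a b, cl t = t := by
    intro t ht
    apply Subtype.ext
    simp only [hcl]
    rw [min_eq_right (Subtype.coe_le_coe.mpr ht.2), max_eq_right (Subtype.coe_le_coe.mpr ht.1)]
  have hcl_cont : Continuous cl :=
    (continuous_const.max (continuous_const.min continuous_subtype_val)).subtype_mk _
  refine ⟨fun t => T.toOpenPartialHomeomorph.symm (cl t, (T e).2), ?_, ?_, ?_⟩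
  · apply T.toOpenPartialHomeomorph.continuousOn_symm.comp_continuous
      (hcl_cont.prodMk continuous_const)
    intro t
    exact T.mem_target.mpr (hsub (hcl_mem t))
  · intro t ht
    have := T.proj_symm_apply (x := (cl t, (T e).2)) (T.mem_target.mpr (hsub (hcl_mem t)))
    simp only at this ⊢
    rw [this, hcl_id t ht]
  · have h1 : cl (p e) = p e := hcl_id _ he
    have h2 : ((p e : unitInterval), (T e).2) = T e := T.mk_proj_snd' (hsub he)
    show T.toOpenPartialHomeomorph.symm (cl (p e), (T e).2) = e
    rw [h1, h2]
    exact T.toOpenPartialHomeomorph.left_inv (T.mem_source.mpr (hsub he))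

/-- Gluing two partial lifts at a point `c`. -/
theorem glue_lift {a b c : unitInterval} (hac : a ≤ c) (hcb : c ≤ b)
    {S₁ S₂ : unitInterval → E} (h₁ : Continuous S₁) (h₂ : Continuous S₂)
    (hl₁ : ∀ t ∈ Icc a c, p (S₁ t) = t) (hl₂ : ∀ t ∈ Icc c b, p (S₂ t) = t)
    (hglue : S₁ c = S₂ c) :
    ∃ S : unitInterval → E, Continuous S ∧ (∀ t ∈ Icc a b, p (S t) = t) ∧
      (∀ t, t ≤ c → S t = S₁ t) ∧ (∀ t, c ≤ t → S t = S₂ t) := by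
  refine ⟨fun t => if t ≤ c then S₁ t else S₂ t, ?_, ?_, ?_, ?_⟩
  · exact Continuous.if_le h₁ h₂ continuous_id continuous_const
      (fun t ht => by rw [show t = c from ht, hglue])
  · intro t ht
    by_cases h : t ≤ c
    · simp only [h, if_pos]
      exact hl₁ t ⟨ht.1, h⟩
    · simp only [h, if_neg, not_false_iff]
      exact hl₂ t ⟨le_of_not_ge h, ht.2⟩
  · intro t ht; simp [ht]
  · intro t ht
    by_cases h : t ≤ c
    · have : t = c := le_antisymm h ht
      simp [this, hglue]
    · simp [h]

/-- Main lifting lemma by induction on the number of steps. -/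
theorem fiber_nonempty_aux (hp : IsCoveringMap p) (e : E) :
    ∀ x : unitInterval, Nonempty (p ⁻¹' {x}) := by
  have hopen : IsOpen (range p) := hp.isLocalHomeomorph.isOpenMap.isOpen_range
  have hclosed : IsClosed (range p) := by
    rw [← isOpen_compl_iff, isOpen_iff_forall_mem_open]
    intro x hx
    obtain ⟨_, U, hxU, hU, _, H, _⟩ := hp x
    refine ⟨U, ?_, hU, hxU⟩
    rintro y hyU ⟨z, rfl⟩
    exact hx ⟨(H ⟨z, hyU⟩).2.1, (H ⟨z, hyU⟩).2.2⟩
  have huniv := (isClopen_iff.mp ⟨hclosed, hopen⟩).resolve_left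
    (Set.nonempty_iff_ne_empty.mp ⟨p e, e, rfl⟩)
  intro x
  obtain ⟨y, hy⟩ : x ∈ range p := huniv ▸ mem_univ x
  exact ⟨⟨y, hy⟩⟩

theorem lift_of_le (hp : IsCoveringMap p) [∀ x : unitInterval, Nonempty (p ⁻¹' {x})] {δ : ℝ} (hδ : 0 < δ)
    (hball : ∀ x : unitInterval, ∃ x' : unitInterval,
      Metric.ball x δ ⊆ ((hp x').toTrivialization).baseSet) :
    ∀ (n : ℕ) (a b : unitInterval), a ≤ b → (b : ℝ) - a ≤ n * (δ / 2) →
      ∀ e : E, p e ∈ Icc a b →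
      ∃ S : unitInterval → E, Continuous S ∧ (∀ t ∈ Icc a b, p (S t) = t) ∧ S (p e) = e := by
  intro n
  induction n with
  | zero =>
    intro a b hab hlen e he
    have : a = b := le_antisymm hab (Subtype.coe_le_coe.mp (by linarith [hlen]))
    subst this
    have hpe : p e = a := le_antisymm he.2 he.1
    exact ⟨fun _ => e, continuous_const, fun t ht => by
      rw [le_antisymm ht.2 ht.1, hpe], by rw [hpe]⟩
  | succ n ih =>
    intro a b hab hlen e he
    -- split point c = max a (b - δ/2)
    have hab' : (a : ℝ) ≤ b := hab
    have hδ2 : (0:ℝ) < δ / 2 := by linarith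
    set c : unitInterval := ⟨max (a : ℝ) ((b : ℝ) - δ / 2),
      ⟨le_max_of_le_left a.2.1, max_le a.2.2 (by linarith [b.2.2])⟩⟩ with hc
    have hac : a ≤ c := Subtype.coe_le_coe.mp (le_max_left _ _)
    have hcb : c ≤ b := Subtype.coe_le_coe.mp (max_le hab' (by linarith))
    have hca : (c : ℝ) - a ≤ n * (δ / 2) := by
      have : (c : ℝ) = max (a : ℝ) ((b : ℝ) - δ / 2) := rfl
      rw [this]
      rcases max_cases (a : ℝ) ((b : ℝ) - δ / 2) with ⟨h, _⟩ | ⟨h, _⟩ <;> rw [h] <;>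
        [(have := n.cast_nonneg (α := ℝ); nlinarith); (push_cast [Nat.cast_succ] at hlen; linarith)]
    have hbc : (b : ℝ) - c ≤ δ / 2 := by
      have : (c : ℝ) = max (a : ℝ) ((b : ℝ) - δ / 2) := rfl
      rw [this]
      rcases le_total (a : ℝ) ((b : ℝ) - δ / 2) with h | h
      · rw [max_eq_right h]; linarith
      · rw [max_eq_left h]
        push_cast [Nat.cast_succ] at hlen
        nlinarith [n.cast_nonneg (α := ℝ)]
    -- the right piece [c,b] lies in a trivialization base set
    obtain ⟨x', hx'⟩ := hball c
    have hsub : Icc c b ⊆ ((hp x').toTrivialization).baseSet := by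
      refine subset_trans ?_ hx'
      intro t ht
      have h1 : (c:ℝ) ≤ t := ht.1
      have h2 : (t:ℝ) ≤ b := ht.2
      have : dist t c < δ := by
        rw [Subtype.dist_eq, Real.dist_eq, abs_of_nonneg (by linarith)]
        linarith
      exact this
    rcases le_total (p e) c with hpe | hpe
    · -- lift through e on [a,c] first, then extend on [c,b]
      obtain ⟨S₁, hS₁c, hS₁l, hS₁e⟩ := ih a c hac hca e ⟨he.1, hpe⟩
      have h1 : p (S₁ c) ∈ Icc c b := by
        rw [hS₁l c ⟨hac, le_rfl⟩]; exact ⟨le_rfl, hcb⟩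
      obtain ⟨S₂, hS₂c, hS₂l, hS₂e⟩ := step_lift ((hp x').toTrivialization) hcb hsub (S₁ c) h1
      rw [hS₁l c ⟨hac, le_rfl⟩] at hS₂e
      obtain ⟨S, hSc, hSl, hS1, _⟩ := glue_lift hac hcb hS₁c hS₂c hS₁l hS₂l hS₂e.symm
      exact ⟨S, hSc, hSl, by rw [hS1 _ hpe, hS₁e]⟩
    · -- lift through e on [c,b] first (step), then extend on [a,c]
      obtain ⟨S₂, hS₂c, hS₂l, hS₂e⟩ :=
        step_lift ((hp x').toTrivialization) hcb hsub e ⟨hpe, he.2⟩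
      have h1 : p (S₂ c) ∈ Icc a c := by
        rw [hS₂l c ⟨le_rfl, hcb⟩]; exact ⟨hac, le_rfl⟩
      obtain ⟨S₁, hS₁c, hS₁l, hS₁e⟩ := ih a c hac hca (S₂ c) h1
      rw [hS₂l c ⟨le_rfl, hcb⟩] at hS₁e
      obtain ⟨S, hSc, hSl, hS1, hS2⟩ := glue_lift hac hcb hS₁c hS₂c hS₁l hS₂l hS₁e
      exact ⟨S, hSc, hSl, by rw [hS2 _ hpe, hS₂e]⟩



/-- Every point of `E` lies on a global continuous section of a covering of `I`. -/
theorem exists_section_through (hp : IsCoveringMap p) [∀ x : unitInterval, Nonempty (p ⁻¹' {x})] (e : E) :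
    ∃ S : unitInterval → E, Continuous S ∧ (∀ t, p (S t) = t) ∧ S (p e) = e := by
  have hcov : (univ : Set unitInterval) ⊆
      ⋃ x : unitInterval, ((hp x).toTrivialization).baseSet := fun x _ =>
    mem_iUnion.mpr ⟨x, (hp x).mem_toTrivialization_baseSet⟩
  obtain ⟨δ, hδ, hball⟩ := lebesgue_number_lemma_of_metric isCompact_univ
    (fun x => ((hp x).toTrivialization).open_baseSet) hcov
  have hball' : ∀ x : unitInterval, ∃ x' : unitInterval,
      Metric.ball x δ ⊆ ((hp x').toTrivialization).baseSet := fun x => hball x trivial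
  obtain ⟨n, hn⟩ := Archimedean.arch (1 : ℝ) (half_pos hδ)
  have hn' : (1 : ℝ) ≤ n * (δ / 2) := by simpa [nsmul_eq_mul] using hn
  have key := lift_of_le hp hδ hball' n 0 1 (by norm_num)
    (by simp only [Icc.coe_one, Icc.coe_zero, sub_zero]; exact hn')
    e ⟨(p e).2.1, (p e).2.2⟩
  obtain ⟨S, hSc, hSl, hSe⟩ := key
  exact ⟨S, hSc, fun t => hSl t ⟨t.2.1, t.2.2⟩, hSe⟩

end

/-- **Every covering space of the unit interval is trivial.**
If `p : E → [0,1]` is a covering map, then `E` is homeomorphic over `[0,1]` to the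
product of `[0,1]` with the fiber `p ⁻¹ {0}`. -/
theorem coveringMap_unitInterval_trivial
    {E : Type*} [TopologicalSpace E]
    (p : E → unitInterval) (hp : IsCoveringMap p) :
    ∃ h : E ≃ₜ unitInterval × (p ⁻¹' {0}),
      ∀ e : E, (h e).1 = p e := by
  haveI : DiscreteTopology ↥(p ⁻¹' {0}) := (hp 0).1
  choose sec hsec_cont hsec_proj hsec_pt using fun e => haveI := fiber_nonempty_aux hp e; exists_section_through hp e
  -- uniqueness of sections through a common point
  have huniq : ∀ (S₁ S₂ : unitInterval → E), Continuous S₁ → Continuous S₂ →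
      (∀ t, p (S₁ t) = t) → (∀ t, p (S₂ t) = t) →
      ∀ t₀ : unitInterval, S₁ t₀ = S₂ t₀ → S₁ = S₂ := by
    intro S₁ S₂ h₁ h₂ hl₁ hl₂ t₀ ht₀
    exact hp.eq_of_comp_eq h₁ h₂ (funext fun t => (hl₁ t).trans (hl₂ t).symm) t₀ ht₀
  -- the candidate inverse map
  set g : unitInterval × (p ⁻¹' {0}) → E := fun q => sec ↑q.2 q.1 with hg
  have hg_proj : ∀ q, p (g q) = q.1 := fun q => hsec_proj _ _
  have hsec_self : ∀ y : (p ⁻¹' {0}), sec ↑y 0 = ↑y := by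
    intro y
    have := hsec_pt ↑y
    rwa [show p ↑y = 0 from y.2] at this
  have hg_cont : Continuous g := by
    rw [continuous_def]
    intro V hV
    have : g ⁻¹' V = ⋃ y : (p ⁻¹' {0}), ((sec ↑y) ⁻¹' V) ×ˢ ({y} : Set (p ⁻¹' {0})) := by
      ext ⟨t, y⟩
      constructor
      · intro hmem
        exact mem_iUnion.mpr ⟨y, hmem, rfl⟩
      · intro hmem
        obtain ⟨y', hy'⟩ := mem_iUnion.mp hmem
        obtain ⟨h1, h2⟩ := (Set.mem_prod).mp hy'
        rw [Set.mem_singleton_iff] at h2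
        subst h2
        exact h1
    rw [this]
    exact isOpen_iUnion fun y =>
      ((hV.preimage (hsec_cont ↑y)).prod (isOpen_discrete _))
  have hg_inj : Function.Injective g := by
    rintro ⟨t, y⟩ ⟨t', y'⟩ hq
    have ht : t = t' := by
      have h1 := hg_proj (t, y)
      have h2 := hg_proj (t', y')
      rw [hq] at h1
      exact h1.symm.trans h2
    subst ht
    have : sec ↑y = sec ↑y' :=
      huniq _ _ (hsec_cont _) (hsec_cont _) (hsec_proj _) (hsec_proj _) t hq
    have hy : (y : E) = ↑y' := by rw [← hsec_self y, ← hsec_self y', this]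
    exact Prod.ext rfl (Subtype.ext hy)
  have hg_surj : Function.Surjective g := by
    intro e
    have hy : sec e 0 ∈ p ⁻¹' {0} := hsec_proj e 0
    refine ⟨(p e, ⟨sec e 0, hy⟩), ?_⟩
    have : sec (sec e 0) = sec e := by
      refine huniq _ _ (hsec_cont _)  (hsec_cont _) (hsec_proj _) (hsec_proj _) 0 ?_
      have := hsec_pt (sec e 0)
      rwa [show p (sec e 0) = 0 from hsec_proj e 0] at this
    show sec (sec e 0) (p e) = e
    rw [this, hsec_pt]
  -- each section is a local homeomorphism, hence open
  have hsec_open : ∀ e, IsOpenMap (sec e) := by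
    intro e
    have hcomp : p ∘ sec e = id := funext (hsec_proj e)
    have : IsLocalHomeomorph (p ∘ sec e) := by
      rw [hcomp]; exact (Homeomorph.refl _).isLocalHomeomorph
    exact (this.of_comp hp.isLocalHomeomorph (hsec_cont e)).isOpenMap
  have hg_open : IsOpenMap g := by
    intro U hU
    have : g '' U = ⋃ y : (p ⁻¹' {0}), sec ↑y '' ((fun t => (t, y)) ⁻¹' U) := by
      ext v
      simp only [Set.mem_image, Set.mem_iUnion, Set.mem_preimage, hg]
      constructor
      · rintro ⟨⟨t, y⟩, hmem, rfl⟩; exact ⟨y, t, hmem, rfl⟩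
      · rintro ⟨y, t, hmem, rfl⟩; exact ⟨(t, y), hmem, rfl⟩
    rw [this]
    exact isOpen_iUnion fun y => hsec_open _ _
      (hU.preimage (continuous_id.prodMk continuous_const))
  let G : unitInterval × (p ⁻¹' {0}) ≃ₜ E :=
    (Equiv.ofBijective g ⟨hg_inj, hg_surj⟩).toHomeomorphOfContinuousOpen hg_cont hg_open
  refine ⟨G.symm, fun e => ?_⟩
  have h1 : g (G.symm e) = e := G.apply_symm_apply e
  calc (G.symm e).1 = p (g (G.symm e)) := (hg_proj _).symm
    _ = p e := by rw [h1]
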